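/- For any x > 0 and α > 1, the factor (2 - (1/√α)(√x + 1/√x)) / (2(1 - 1/√α)) is at most 1, with equality if and only if x = 1. Consequently, the chasing-liquidity update with P = Z never increases liquidity when the price moves. -/
import Mathlib


open Real

/-- The chasing-liquidity one-step factor is at most `1`, with equality iff `x = 1`:
the strategy never increases liquidity when the price moves. -/
theorem chasing_factor_le_one
    (x α : ℝ) (hx : 0 < x) (hα : 1 < α) :
    (2 - (1 / Real.sqrt α) * (Real.sqrt x + 1 / Real.sqrt x)) / (2 * (1 - 1 / Real.sqrt α)) ≤ 1 ∧
    ((2 - (1 / Real.sqrt α) * (Real.sqrt x + 1 / Real.sqrt x)) / (2 * (1 - 1 / Real.sqrt α)) = 1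
      ↔ x = 1) := by
  set a := Real.sqrt α with ha
  set s := Real.sqrt x with hs
  have ha1 : 1 < a := by
    have := Real.sqrt_lt_sqrt (by norm_num : (0:ℝ) ≤ 1) hα
    simpa using this
  have ha0 : 0 < a := by linarith
  have hs0 : 0 < s := Real.sqrt_pos.mpr hx
  have hD : 0 < 2 * (1 - 1 / a) := by
    have : 1 / a < 1 := by rw [div_lt_one ha0]; exact ha1
    linarith
  have hkey : 2 ≤ s + 1 / s := by
    rw [← sub_nonneg]
    have h2 : s + 1 / s - 2 = (s - 1)^2 / s := by field_simp; ring
    rw [h2]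
    positivity
  have hse : s + 1 / s = 2 ↔ s = 1 := by
    constructor
    · intro h
      have h2 : s^2 - 2*s + 1 = 0 := by field_simp at h; nlinarith
      nlinarith [sq_nonneg (s - 1)]
    · intro h; rw [h]; norm_num
  constructor
  · rw [div_le_one hD]
    have : 2 / a ≤ (1 / a) * (s + 1 / s) := by
      rw [div_eq_mul_inv, mul_comm]
      have : (0:ℝ) < 1 / a := by positivity
      calc a⁻¹ * 2 = (1/a) * 2 := by rw [one_div]
        _ ≤ (1/a) * (s + 1/s) := by
          apply mul_le_mul_of_nonneg_left hkey (le_of_lt this)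
    have h2 : 2 * (1 - 1/a) = 2 - 2/a := by ring
    linarith
  · rw [div_eq_one_iff_eq (ne_of_gt hD)]
    constructor
    · intro h
      have hsum : s + 1 / s = 2 := by
        have ha0' : a ≠ 0 := ne_of_gt ha0
        field_simp at h
        have h3 : a * (s * (s + 1/s) - 2 * s) = 0 := by
          have hs0' : s ≠ 0 := ne_of_gt hs0
          field_simp
          nlinarith [h]
        have hs0' : s ≠ 0 := ne_of_gt hs0
        have h4 : s * (s + 1/s) - 2 * s = 0 := by
          rcases mul_eq_zero.mp h3 with h' | h'
          · exact absurd h' ha0'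
          · exact h'
        have h5 : s * (s + 1/s - 2) = 0 := by linarith [h4]; 
        rcases mul_eq_zero.mp h5 with h' | h'
        · exact absurd h' hs0'
        · linarith
      have : s = 1 := hse.mp hsum
      have : Real.sqrt x = 1 := this
      nlinarith [Real.sq_sqrt hx.le, this]
    · intro h
      subst h
      simp [hs, Real.sqrt_one]
      ring
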